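/- Fix N_i > 0 for i = 1,…,n and partitions {I₁,…,I_ℓ} and {J₁,…,J_m} of {1,…,n} such that each I_p is contained in some J_q. Let g_p := 1 − ∑_{i∈I_p} (x_i/N_i)^d for p = 1,…,ℓ, h_q := 1 − ∑_{i∈J_q} (x_i/N_i)^d for q = 1,…,m, g := (g₁,…,g_ℓ), h := (h₁,…,h_m). For λ ∈ [0,∞)^ℓ define μ ∈ [0,∞)^m by μ_q := ∑_{p : I_p ⊆ J_q} λ_p, and set G(λ) := f − ∑_{p=1}^ℓ λ_p g_p and H(μ) := f − ∑_{q=1}^m μ_q h_q. Then G(λ)_gp ≤ H(μ)_gp for every λ ∈ [0,∞)^ℓ; consequently s(f,g) ≤ s(f,h). -/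

import Mathlib

open MvPolynomial Finset

noncomputable section

/-- `Finset.filter` with classical decidability. -/
def pfilter {β : Type*} (s : Finset β) (q : β → Prop) : Finset β :=
  @Finset.filter β q (fun _ => Classical.propDecidable _) s

/-- `|α| := α₁ + ⋯ + αₙ` for a multi-index `α`. -/
def adeg {n : ℕ} (α : Fin n →₀ ℕ) : ℕ := ∑ i, α i

/-- `Ω(p) := {α : |α| ≤ d, p_α ≠ 0, α ∉ {0, ε₁, …, εₙ}}`. -/
def OmegaSet {n : ℕ} (d : ℕ) (p : MvPolynomial (Fin n) ℝ) : Finset (Fin n →₀ ℕ) :=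
  pfilter p.support (fun α => adeg α ≤ d ∧ α ≠ 0 ∧ ∀ i, α ≠ Finsupp.single i d)

/-- `Δ(p) := {α ∈ Ω(p) : p_α x^α is not a square}`. -/
def DelSet {n : ℕ} (d : ℕ) (p : MvPolynomial (Fin n) ℝ) : Finset (Fin n →₀ ℕ) :=
  pfilter (OmegaSet d p)
    (fun α => ¬ IsSquare ((monomial α (p.coeff α)) : MvPolynomial (Fin n) ℝ))

/-- Feasibility for program (lw) for `p`. -/
def LwFeas {n : ℕ} (d : ℕ) (p : MvPolynomial (Fin n) ℝ)
    (z : (Fin n →₀ ℕ) → Fin n → ℝ) : Prop :=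
  (∀ α ∈ DelSet d p, ∀ i, 0 ≤ z α i ∧ (z α i = 0 ↔ α i = 0)) ∧
  (∀ i, ∑ α ∈ DelSet d p, z α i ≤ p.coeff (Finsupp.single i d)) ∧
  (∀ α ∈ DelSet d p, adeg α = d →
    ∏ i, (z α i / (α i : ℝ)) ^ (α i) = (p.coeff α / (d : ℝ)) ^ d)

/-- The objective function `v` of program (lw). -/
def lwObj {n : ℕ} (d : ℕ) (p : MvPolynomial (Fin n) ℝ)
    (z : (Fin n →₀ ℕ) → Fin n → ℝ) : ℝ :=
  ∑ α ∈ pfilter (DelSet d p) (fun α => adeg α < d),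
    ((d : ℝ) - (adeg α : ℝ)) *
      (((p.coeff α / (d : ℝ)) ^ d * ∏ i, ((α i : ℝ) / z α i) ^ (α i)) ^
        ((1 : ℝ) / ((d : ℝ) - (adeg α : ℝ))))

/-- `ρ(p) ∈ [0,∞]`, the infimum of `v` over the feasible set (`⊤` if infeasible). -/
def lwRho {n : ℕ} (d : ℕ) (p : MvPolynomial (Fin n) ℝ) : EReal :=
  sInf ((fun z => ((lwObj d p z : ℝ) : EReal)) '' {z | LwFeas d p z})

/-- `p_gp := p(0) − ρ(p) ∈ ℝ ∪ {−∞}`. -/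
def lwGp {n : ℕ} (d : ℕ) (p : MvPolynomial (Fin n) ℝ) : EReal :=
  ((eval (0 : Fin n → ℝ) p : ℝ) : EReal) - lwRho d p

/-- `G(λ) := f − ∑ⱼ λⱼ gⱼ`. -/
def polyG {n m : ℕ} (f : MvPolynomial (Fin n) ℝ) (g : Fin m → MvPolynomial (Fin n) ℝ)
    (lam : Fin m → ℝ) : MvPolynomial (Fin n) ℝ :=
  f - ∑ j, C (lam j) * g j

/-- `s(f,g) := sup{G(λ)_gp : λ ∈ [0,∞)^m}`. -/
def sBound {n m : ℕ} (d : ℕ) (f : MvPolynomial (Fin n) ℝ)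
    (g : Fin m → MvPolynomial (Fin n) ℝ) : EReal :=
  sSup ((fun lam => lwGp d (polyG f g lam)) '' {lam : Fin m → ℝ | ∀ j, 0 ≤ lam j})

/-!
Off the constant term and the pure powers `x_i^d`, `G(λ)` and `H(μ)` have the same coefficients,
so program (lw) has the same index set `Δ` and the same objective for both. Their constant terms
agree because `∑_q μ_q = ∑_p λ_p`, and the coefficient of `x_i^d` grows from
`f_{d,i} + N_i^{-d} ∑_{p ∋ i} λ_p` to `f_{d,i} + N_i^{-d} ∑_{q ∋ i} μ_q`: this only enlarges the
feasible set of (lw), hence lowers `ρ`.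
-/

lemma mem_pfilter {β : Type*} {s : Finset β} {q : β → Prop} {a : β} :
    a ∈ pfilter s q ↔ a ∈ s ∧ q a := by
  classical
  rw [pfilter, Finset.filter_congr_decidable, Finset.mem_filter]

lemma pfilter_eq_filter {β : Type*} (s : Finset β) (q : β → Prop) [DecidablePred q] :
    pfilter s q = s.filter q := by
  rw [pfilter, Finset.filter_congr_decidable]

def AgreeOffPurePowers {n : ℕ} (d : ℕ) (p q : MvPolynomial (Fin n) ℝ) : Prop :=
  ∀ α, α ≠ 0 → (∀ i, α ≠ Finsupp.single i d) → p.coeff α = q.coeff α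

section AgreeOffPurePowers

variable {n d : ℕ} {p q : MvPolynomial (Fin n) ℝ}

lemma omegaSet_congr (hpq : AgreeOffPurePowers d p q) :
    OmegaSet d p = OmegaSet d q := by
  ext α
  simp only [OmegaSet, mem_pfilter, mem_support_iff]
  constructor
  · rintro ⟨hp, hdeg, hα0, hαd⟩
    exact ⟨hpq α hα0 hαd ▸ hp, hdeg, hα0, hαd⟩
  · rintro ⟨hq, hdeg, hα0, hαd⟩
    exact ⟨(hpq α hα0 hαd).symm ▸ hq, hdeg, hα0, hαd⟩

lemma coeff_eq_of_mem_omegaSet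
    (hpq : AgreeOffPurePowers d p q) {α : Fin n →₀ ℕ} (hα : α ∈ OmegaSet d p) :
    p.coeff α = q.coeff α :=
  have hα := (mem_pfilter.mp hα).2.2
  hpq α hα.1 hα.2

lemma delSet_congr (hpq : AgreeOffPurePowers d p q) :
    DelSet d p = DelSet d q := by
  ext α
  simp only [DelSet, mem_pfilter]
  constructor
  · rintro ⟨hα, hsq⟩
    exact ⟨omegaSet_congr hpq ▸ hα, coeff_eq_of_mem_omegaSet hpq hα ▸ hsq⟩
  · rintro ⟨hα, hsq⟩
    refine ⟨(omegaSet_congr hpq).symm ▸ hα, ?_⟩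
    rwa [coeff_eq_of_mem_omegaSet hpq ((omegaSet_congr hpq).symm ▸ hα)]

lemma coeff_eq_of_mem_delSet
    (hpq : AgreeOffPurePowers d p q) {α : Fin n →₀ ℕ} (hα : α ∈ DelSet d p) :
    p.coeff α = q.coeff α :=
  coeff_eq_of_mem_omegaSet hpq (mem_pfilter.mp hα).1

lemma lwObj_congr (hpq : AgreeOffPurePowers d p q) :
    lwObj d p = lwObj d q := by
  ext z
  unfold lwObj
  rw [← delSet_congr hpq]
  refine Finset.sum_congr rfl fun α hα => ?_
  rw [coeff_eq_of_mem_delSet hpq (mem_pfilter.mp hα).1]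

lemma LwFeas.of_coeff_single_le
    (hpq : AgreeOffPurePowers d p q)
    (hle : ∀ i, p.coeff (Finsupp.single i d) ≤ q.coeff (Finsupp.single i d))
    {z : (Fin n →₀ ℕ) → Fin n → ℝ} (hz : LwFeas d p z) : LwFeas d q z := by
  obtain ⟨hpos, hsum, hdeg⟩ := hz
  rw [LwFeas, ← delSet_congr hpq]
  refine ⟨hpos, fun i => (hsum i).trans (hle i), fun α hα hαd => ?_⟩
  rw [← coeff_eq_of_mem_delSet hpq hα]
  exact hdeg α hα hαd

lemma lwGp_le_of_coeff
    (hpq : AgreeOffPurePowers d p q)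
    (hle : ∀ i, p.coeff (Finsupp.single i d) ≤ q.coeff (Finsupp.single i d))
    (h0 : p.coeff 0 = q.coeff 0) : lwGp d p ≤ lwGp d q := by
  have hrho : lwRho d q ≤ lwRho d p := by
    apply sInf_le_sInf
    rintro _ ⟨z, hz, rfl⟩
    exact ⟨z, LwFeas.of_coeff_single_le hpq hle hz, by rw [lwObj_congr hpq]⟩
  rw [lwGp, lwGp, eval_zero, constantCoeff_eq, h0]
  exact EReal.sub_le_sub le_rfl hrho

end AgreeOffPurePowers

section PurePowers

variable {n d : ℕ}

lemma sum_C_mul_one_sub_sum_C_mul_X_pow {ι : Type*} [Fintype ι] (c : Fin n → ℝ)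
    (I : ι → Finset (Fin n)) (lam : ι → ℝ) :
    ∑ p, C (lam p) * (1 - ∑ i ∈ I p, C (c i) * X i ^ d) =
      C (∑ p, lam p) - ∑ i, C (c i * ∑ p with i ∈ I p, lam p) * X i ^ d := by
  have hswap : ∑ p, ∑ i ∈ I p, C (lam p) * (C (c i) * X i ^ d) =
      ∑ i, ∑ p with i ∈ I p, C (lam p) * (C (c i) * X i ^ d) :=
    Finset.sum_comm' fun p i => by simp
  simp only [mul_sub, mul_one, Finset.sum_sub_distrib, Finset.mul_sum, hswap, map_sum]
  congr 1
  refine Finset.sum_congr rfl fun i _ => ?_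
  rw [Finset.sum_mul]
  exact Finset.sum_congr rfl fun p _ => by rw [map_mul]; ring

lemma coeff_sub_C_sub_sum_C_mul_X_pow (f : MvPolynomial (Fin n) ℝ) (a : ℝ) (b : Fin n → ℝ)
    (α : Fin n →₀ ℕ) :
    (f - (C a - ∑ i, C (b i) * X i ^ d)).coeff α =
      f.coeff α - (if 0 = α then a else 0) + ∑ i, if Finsupp.single i d = α then b i else 0 := by
  simp only [coeff_sub, coeff_C, coeff_sum, coeff_C_mul, coeff_X_pow, mul_ite, mul_one, mul_zero]
  ring

lemma agreeOffPurePowers_sub_C_sub_sum (f : MvPolynomial (Fin n) ℝ) (a : ℝ) (b b' : Fin n → ℝ) :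
    AgreeOffPurePowers d (f - (C a - ∑ i, C (b i) * X i ^ d))
      (f - (C a - ∑ i, C (b' i) * X i ^ d)) := by
  intro α hα0 hαd
  rw [coeff_sub_C_sub_sum_C_mul_X_pow, coeff_sub_C_sub_sum_C_mul_X_pow]
  simp [Ne.symm hα0, fun i => Ne.symm (hαd i)]

lemma lwGp_sub_C_sub_sum_le (hd : d ≠ 0) (f : MvPolynomial (Fin n) ℝ) (a : ℝ) {b b' : Fin n → ℝ}
    (hb : b ≤ b') :
    lwGp d (f - (C a - ∑ i, C (b i) * X i ^ d)) ≤ lwGp d (f - (C a - ∑ i, C (b' i) * X i ^ d)) := by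
  refine lwGp_le_of_coeff (agreeOffPurePowers_sub_C_sub_sum f a b b') (fun j => ?_) ?_
  all_goals rw [coeff_sub_C_sub_sum_C_mul_X_pow, coeff_sub_C_sub_sum_C_mul_X_pow]
  · simp [Finsupp.single_left_inj hd, hb j]
  · simp [hd]

end PurePowers

section Refinement

variable {σ ι κ : Type*} {I : ι → Finset σ} {J : κ → Finset σ}

lemma exists_refinement_map (hIne : ∀ p, (I p).Nonempty)
    (hJdisj : ∀ q q', q ≠ q' → Disjoint (J q) (J q')) (href : ∀ p, ∃ q, I p ⊆ J q) :
    ∃ φ : ι → κ, ∀ p q, I p ⊆ J q ↔ φ p = q := by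
  choose φ hφ using href
  refine ⟨φ, fun p q => ⟨fun hpq => ?_, fun h => h ▸ hφ p⟩⟩
  by_contra hne
  obtain ⟨i, hi⟩ := hIne p
  exact Finset.disjoint_left.mp (hJdisj _ _ hne) (hφ p hi) (hpq hi)

lemma sum_mem_le_sum_mem_fiberwise [DecidableEq σ] [Fintype ι] [Fintype κ] [DecidableEq κ]
    {φ : ι → κ} (hφ : ∀ p, I p ⊆ J (φ p)) {lam : ι → ℝ} (hlam : ∀ p, 0 ≤ lam p) (i : σ) :
    ∑ p with i ∈ I p, lam p ≤ ∑ q with i ∈ J q, ∑ p with φ p = q, lam p := by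
  calc ∑ p with i ∈ I p, lam p ≤ ∑ p with i ∈ J (φ p), lam p :=
        Finset.sum_le_sum_of_subset_of_nonneg (Finset.monotone_filter_right _ fun p _ => @hφ p i)
          fun p _ _ => hlam p
    _ = ∑ q with i ∈ J q, ∑ p with φ p = q, lam p := by
        rw [← Finset.sum_fiberwise_of_maps_to (g := φ) (t := {q | i ∈ J q}) (by simp)]
        refine Finset.sum_congr rfl fun q hq => ?_
        refine Finset.sum_congr ?_ fun _ _ => rfl
        ext p
        simp only [Finset.mem_filter, Finset.mem_univ, true_and] at hq ⊢
        exact ⟨And.right, fun hp => ⟨hp ▸ hq, hp⟩⟩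

end Refinement

lemma sBound_le_sBound {n l m d : ℕ} {f : MvPolynomial (Fin n) ℝ}
    {g : Fin l → MvPolynomial (Fin n) ℝ} {h : Fin m → MvPolynomial (Fin n) ℝ}
    (hgh : ∀ lam : Fin l → ℝ, (∀ p, 0 ≤ lam p) →
      ∃ mu : Fin m → ℝ, (∀ q, 0 ≤ mu q) ∧ lwGp d (polyG f g lam) ≤ lwGp d (polyG f h mu)) :
    sBound d f g ≤ sBound d f h := by
  refine sSup_le ?_
  rintro _ ⟨lam, hlam, rfl⟩
  obtain ⟨mu, hmu, hle⟩ := hgh lam hlam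
  exact hle.trans (le_sSup ⟨mu, hmu, rfl⟩)

theorem stmt19_general {n : ℕ} (d : ℕ) (hd2 : 2 ≤ d)
    (f : MvPolynomial (Fin n) ℝ)
    (N : Fin n → ℝ) (hN : ∀ i, 0 < N i)
    (l m : ℕ) (I : Fin l → Finset (Fin n)) (J : Fin m → Finset (Fin n))
    (hIne : ∀ p, (I p).Nonempty)
    (hJdisj : ∀ q q', q ≠ q' → Disjoint (J q) (J q'))
    (href : ∀ p, ∃ q, I p ⊆ J q)
    (g : Fin l → MvPolynomial (Fin n) ℝ)
    (hg : ∀ p, g p = 1 - ∑ i ∈ I p, C ((N i ^ d)⁻¹) * X i ^ d)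
    (h : Fin m → MvPolynomial (Fin n) ℝ)
    (hh : ∀ q, h q = 1 - ∑ i ∈ J q, C ((N i ^ d)⁻¹) * X i ^ d) :
    (∀ lam : Fin l → ℝ, (∀ p, 0 ≤ lam p) →
      lwGp d (polyG f g lam) ≤
        lwGp d (polyG f h (fun q => ∑ p ∈ pfilter Finset.univ (fun p => I p ⊆ J q), lam p))) ∧
    sBound d f g ≤ sBound d f h := by
  obtain ⟨φ, hφ⟩ := exists_refinement_map hIne hJdisj href
  have hmu : ∀ (lam : Fin l → ℝ) q,
      ∑ p ∈ pfilter Finset.univ (fun p => I p ⊆ J q), lam p = ∑ p with φ p = q, lam p := by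
    simp only [pfilter_eq_filter, hφ, implies_true]
  have key : ∀ lam : Fin l → ℝ, (∀ p, 0 ≤ lam p) →
      lwGp d (polyG f g lam) ≤ lwGp d (polyG f h fun q => ∑ p with φ p = q, lam p) := by
    intro lam hlam
    -- `Finset.sum_fiberwise` rewrites `∑ q, μ q` as `∑ p, λ p`, so the constant terms agree.
    simp only [polyG, hg, hh, sum_C_mul_one_sub_sum_C_mul_X_pow, Finset.sum_fiberwise]
    refine lwGp_sub_C_sub_sum_le (by omega) f _ fun i => mul_le_mul_of_nonneg_left
      (sum_mem_le_sum_mem_fiberwise (fun p => ((hφ p _).2 rfl)) hlam i) ?_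
    have := hN i
    positivity
  simp only [hmu]
  exact ⟨key, sBound_le_sBound fun lam hlam =>
    ⟨_, fun q => Finset.sum_nonneg fun p _ => hlam p, key lam hlam⟩⟩

/-- Refining the partition can only decrease the bound: if `{I_p}` refines `{J_q}` and
`μ_q = ∑_{I_p ⊆ J_q} λ_p`, then `G(λ)_gp ≤ H(μ)_gp`, and consequently `s(f,g) ≤ s(f,h)`. -/
theorem stmt19 {n : ℕ} (hn : 1 ≤ n) (d : ℕ) (hd2 : 2 ≤ d) (hde : Even d)
    (f : MvPolynomial (Fin n) ℝ) (hdf : f.totalDegree ≤ d)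
    (N : Fin n → ℝ) (hN : ∀ i, 0 < N i)
    (l m : ℕ) (I : Fin l → Finset (Fin n)) (J : Fin m → Finset (Fin n))
    (hIne : ∀ p, (I p).Nonempty) (hJne : ∀ q, (J q).Nonempty)
    (hIdisj : ∀ p p', p ≠ p' → Disjoint (I p) (I p'))
    (hJdisj : ∀ q q', q ≠ q' → Disjoint (J q) (J q'))
    (hIcov : ∀ i : Fin n, ∃ p, i ∈ I p) (hJcov : ∀ i : Fin n, ∃ q, i ∈ J q)
    (href : ∀ p, ∃ q, I p ⊆ J q)
    (g : Fin l → MvPolynomial (Fin n) ℝ)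
    (hg : ∀ p, g p = 1 - ∑ i ∈ I p, C ((N i ^ d)⁻¹) * X i ^ d)
    (h : Fin m → MvPolynomial (Fin n) ℝ)
    (hh : ∀ q, h q = 1 - ∑ i ∈ J q, C ((N i ^ d)⁻¹) * X i ^ d) :
    (∀ lam : Fin l → ℝ, (∀ p, 0 ≤ lam p) →
      lwGp d (polyG f g lam) ≤
        lwGp d (polyG f h (fun q => ∑ p ∈ pfilter Finset.univ (fun p => I p ⊆ J q), lam p))) ∧
    sBound d f g ≤ sBound d f h :=
  stmt19_general d hd2 f N hN l m I J hIne hJdisj href g hg h hh
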